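/- Let S be the rectangular band on Λ × Λ with product (t,u)·(v,w) = (t,w), where Λ is a commutative ring and α ∈ Λ has α² = 0, and define the relation (t,u) ≈ (v,w) iff α*(t-v) = 0 and α*(u-w) = 0 ('double α-equality'). Then ≈ is a congruence on S, and the quotient S/≈ embeds into the multiplicative semigroup of 2×2 matrices over Λ via (t,u) ↦ ![![0, α*t],![α*u, 1]]. -/
import Mathlib


theorem stmt_11 (Λ : Type*) [CommRing Λ] (α : Λ) (hα : α ^ 2 = 0) :
    let r : Λ × Λ → Λ × Λ → Prop :=
      fun p q => α * (p.1 - q.1) = 0 ∧ α * (p.2 - q.2) = 0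
    let F : Λ × Λ → Matrix (Fin 2) (Fin 2) Λ :=
      fun p => !![0, α * p.1; α * p.2, 1]
    Equivalence r ∧
      (∀ p p' q q' : Λ × Λ, r p p' → r q q' → r (p.1, q.2) (p'.1, q'.2)) ∧
      (∀ p q : Λ × Λ, F p = F q ↔ r p q) ∧
      ∀ p q : Λ × Λ, F p * F q = F (p.1, q.2) := by
  intro r F
  refine ⟨⟨fun p => by simp [r], fun {p q} h => ⟨?_, ?_⟩, fun {p q s} h1 h2 => ⟨?_, ?_⟩⟩,
    fun p p' q q' h1 h2 => ⟨h1.1, h2.2⟩, fun p q => ?_, fun p q => ?_⟩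
  · have := h.1; linear_combination -this
  · have := h.2; linear_combination -this
  · linear_combination h1.1 + h2.1
  · linear_combination h1.2 + h2.2
  · constructor
    · intro h
      have h1 := congrFun (congrFun h 0) 1
      have h2 := congrFun (congrFun h 1) 0
      simp only [F, Matrix.of_apply, Matrix.cons_val', Matrix.cons_val_zero, Matrix.cons_val_one, Matrix.head_cons, Matrix.vecHead, Matrix.empty_val', Matrix.cons_val_fin_one] at h1 h2
      exact ⟨by linear_combination h1, by linear_combination h2⟩
    · intro h
      have h1 : α * p.1 = α * q.1 := by linear_combination h.1
      have h2 : α * p.2 = α * q.2 := by linear_combination h.2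
      simp [F, h1, h2]
  · ext i j
    fin_cases i <;> fin_cases j <;>
      simp [F, Matrix.mul_apply, Fin.sum_univ_two] <;> ring_nf <;>
      simp [← pow_two, hα]
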